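/- arXiv:1712.09006 — 3 statements merged into one kernel-verified Lean document; each statement's English description precedes it below -/
import Mathlib

section
/- (Sufficiency of additivity on orthogonal projectors for convexity) Let L, R : Matrix (Fin d) (Fin d) ℂ → ℝ satisfy 0 ≤ L P ≤ R P ≤ 1 for every projector P, L 0 = R 0 = 0, L 1 = R 1 = 1, L (1 − P) = 1 − R P and R (1 − P) = 1 − L P for every projector P, and suppose that for all projectors P₀, P₁ with P₀ * P₁ = 0 one has L (P₀ + P₁) = L P₀ + L P₁ and R (P₀ + P₁) = R P₀ + R P₁. Then for all projectors P, P' with P * P' = P' * P one has L (P + P' − P * P') + L (P * P') = L P + L P' and R (P + P' − P * P') + R (P * P') = R P + R P'; in particular the convexity condition holds and (L, R) is a QIVPM on ℂ^d. -/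
open Matrix
open scoped ComplexOrder

/-- A projector on `ℂ^d`: an idempotent, self-adjoint matrix. -/
def IsProjector {d : ℕ} (P : Matrix (Fin d) (Fin d) ℂ) : Prop :=
  P * P = P ∧ Pᴴ = P

/-- A quantum interval-valued probability measure (QIVPM) on `ℂ^d`,
given by the pair of interval-endpoint functions `L ≤ R`. -/
def IsQIVPM {d : ℕ} (L R : Matrix (Fin d) (Fin d) ℂ → ℝ) : Prop :=
  (∀ P, IsProjector P → 0 ≤ L P ∧ L P ≤ R P ∧ R P ≤ 1) ∧
  (L 0 = 0 ∧ R 0 = 0) ∧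
  (L 1 = 1 ∧ R 1 = 1) ∧
  (∀ P, IsProjector P → L (1 - P) = 1 - R P ∧ R (1 - P) = 1 - L P) ∧
  (∀ P₀ P₁, IsProjector P₀ → IsProjector P₁ → P₀ * P₁ = P₁ * P₀ →
    L P₀ + L P₁ ≤ L (P₀ + P₁ - P₀ * P₁) + L (P₀ * P₁) ∧
    R (P₀ + P₁ - P₀ * P₁) + R (P₀ * P₁) ≤ R P₀ + R P₁)

/-- A QIVPM is `δ`-deterministic if every projector's interval lies in `[0,δ]` or `[1-δ,1]`. -/
def IsDeltaDet {d : ℕ} (δ : ℝ) (L R : Matrix (Fin d) (Fin d) ℂ → ℝ) : Prop :=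
  ∀ P, IsProjector P → R P ≤ δ ∨ 1 - δ ≤ L P

/-- A QIVPM is `0`-deterministic if every projector is assigned `[0,0]` or `[1,1]`. -/
def IsZeroDet {d : ℕ} (L R : Matrix (Fin d) (Fin d) ℂ → ℝ) : Prop :=
  ∀ P, IsProjector P → (L P = 0 ∧ R P = 0) ∨ (L P = 1 ∧ R P = 1)

/-- A state (density matrix) on `ℂ^d`. -/
def IsState {d : ℕ} (ρ : Matrix (Fin d) (Fin d) ℂ) : Prop :=
  ρ.PosSemidef ∧ ρ.trace = 1

/-!
Write `r = P P'`. For commuting projectors `P, P'` the three projectors `P - r`, `P' - r` and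
`r` are mutually orthogonal, and `P`, `P'`, `P + P' - r` are orthogonal sums of them:
`P = (P - r) + r`, `P' = (P' - r) + r`, `P + P' - r = (P - r) + (P' - r) + r`. Additivity on
orthogonal pairs therefore gives both modular identities, and convexity holds with equality.
-/

section OrthogonallyAdditive

variable {R M : Type*} [NonUnitalRing R] [StarRing R] [AddCommMonoid M]

def IsOrthogonallyAdditive (f : R → M) : Prop :=
  ∀ ⦃p q : R⦄, IsStarProjection p → IsStarProjection q → p * q = 0 → f (p + q) = f p + f q

theorem IsOrthogonallyAdditive.map_add_sub_mul_add_map_mul {f : R → M}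
    (hf : IsOrthogonallyAdditive f) {p q : R} (hp : IsStarProjection p)
    (hq : IsStarProjection q) (hpq : Commute p q) :
    f (p + q - p * q) + f (p * q) = f p + f q := by
  set r := p * q with hr_def
  have hr : IsStarProjection r := hp.mul hq hpq
  have hrr : r * r = r := hr.isIdempotentElem.eq
  have hpr : p * r = r := by rw [← mul_assoc, hp.isIdempotentElem.eq]
  have hqr : q * r = r := by rw [hr_def, ← mul_assoc, ← hpq.eq, mul_assoc, hq.isIdempotentElem.eq]
  have hrq : r * q = r := by rw [mul_assoc, hq.isIdempotentElem.eq]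
  have ha : IsStarProjection (p - r) := hr.sub_of_mul_eq_right hp hpr
  have hb : IsStarProjection (q - r) := hr.sub_of_mul_eq_right hq hqr
  have har : (p - r) * r = 0 := by rw [sub_mul, hpr, hrr, sub_self]
  have hbr : (q - r) * r = 0 := by rw [sub_mul, hqr, hrr, sub_self]
  have hab : (p - r) * (q - r) = 0 := by
    rw [sub_mul, mul_sub, mul_sub, ← hr_def, hpr, hrq, hrr, sub_self]
  have hp_split : f p = f (p - r) + f r := by rw [← hf ha hr har, sub_add_cancel]
  have hq_split : f q = f (q - r) + f r := by rw [← hf hb hr hbr, sub_add_cancel]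
  have hs_split : f (p + q - r) = f (p - r) + f (q - r) + f r := by
    rw [← hf ha hb hab, ← hf (ha.add hb hab) hr (by rw [add_mul, har, hbr, add_zero])]
    congr 1
    abel
  rw [hs_split, hp_split, hq_split]
  abel

end OrthogonallyAdditive

theorem isProjector_iff_isStarProjection {d : ℕ} {P : Matrix (Fin d) (Fin d) ℂ} :
    IsProjector P ↔ IsStarProjection P := by
  rw [isStarProjection_iff', Matrix.star_eq_conjTranspose]
  rfl

/-- Sufficiency of additivity on orthogonal projectors for convexity. -/
theorem additivity_implies_convexity (d : ℕ) (L R : Matrix (Fin d) (Fin d) ℂ → ℝ)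
    (h1 : ∀ P, IsProjector P → 0 ≤ L P ∧ L P ≤ R P ∧ R P ≤ 1)
    (h2 : L 0 = 0 ∧ R 0 = 0)
    (h3 : L 1 = 1 ∧ R 1 = 1)
    (h4 : ∀ P, IsProjector P → L (1 - P) = 1 - R P ∧ R (1 - P) = 1 - L P)
    (h5 : ∀ P₀ P₁, IsProjector P₀ → IsProjector P₁ → P₀ * P₁ = 0 →
      L (P₀ + P₁) = L P₀ + L P₁ ∧ R (P₀ + P₁) = R P₀ + R P₁) :
    (∀ P P', IsProjector P → IsProjector P' → P * P' = P' * P →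
      L (P + P' - P * P') + L (P * P') = L P + L P' ∧
      R (P + P' - P * P') + R (P * P') = R P + R P') ∧
    IsQIVPM L R := by
  simp only [isProjector_iff_isStarProjection] at h5
  have hL : IsOrthogonallyAdditive L := fun _ _ hp hq hpq => (h5 _ _ hp hq hpq).1
  have hR : IsOrthogonallyAdditive R := fun _ _ hp hq hpq => (h5 _ _ hp hq hpq).2
  have modular : ∀ P P', IsProjector P → IsProjector P' → P * P' = P' * P →
      L (P + P' - P * P') + L (P * P') = L P + L P' ∧
      R (P + P' - P * P') + R (P * P') = R P + R P' := by
    intro P P' hP hP' hc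
    rw [isProjector_iff_isStarProjection] at hP hP'
    exact ⟨hL.map_add_sub_mul_add_map_mul hP hP' hc, hR.map_add_sub_mul_add_map_mul hP hP' hc⟩
  refine ⟨modular, h1, h2, h3, h4, fun P₀ P₁ hP₀ hP₁ hc => ?_⟩
  obtain ⟨hL_eq, hR_eq⟩ := modular P₀ P₁ hP₀ hP₁ hc
  exact ⟨hL_eq.ge, hR_eq.le⟩
end

section
/- (Finite-precision extension of Gleason's theorem) Let (ℓ, r) be an interval map on [0,1], let α ≥ 0 satisfy r x − ℓ x ≤ α for all x ∈ [0,1], let ρ be a state on ℂ^d, and suppose that the composite assignment P ↦ [ℓ (Re (Matrix.trace (ρ * P))), r (Re (Matrix.trace (ρ * P)))] is a QIVPM on ℂ^d. If ρ' is a state on ℂ^d such that ℓ (Re (Matrix.trace (ρ * P))) ≤ Re (Matrix.trace (ρ' * P)) ≤ r (Re (Matrix.trace (ρ * P))) for every projector P, then the L2 operator norm (spectral norm) of ρ − ρ' is at most α; equivalently, every eigenvalue of the Hermitian matrix ρ − ρ' has absolute value at most α. -/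
/-!
Each eigenvalue of the Hermitian matrix `ρ - ρ'` equals `tr (ρ P) - tr (ρ' P)` for the rank-one
projector `P` onto a unit eigenvector. With `x = tr (ρ P) ∈ [0, 1]`, both `x` and `tr (ρ' P)` lie
in `[ℓ x, r x]`, an interval of length at most `α`. The L2 operator norm of a Hermitian matrix is
the largest absolute value of its eigenvalues, by unitary invariance of the norm in the spectral
decomposition.
-/

open Matrix
open scoped ComplexOrder

namespace IsProjector

variable {d : ℕ} {P : Matrix (Fin d) (Fin d) ℂ}

lemma one_sub (hP : IsProjector P) : IsProjector (1 - P) :=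
  ⟨by rw [sub_mul, one_mul, mul_sub, mul_one, hP.1, sub_self, sub_zero],
    by rw [conjTranspose_sub, conjTranspose_one, hP.2]⟩

lemma vecMulVec_star {v : Fin d → ℂ} (hv : star v ⬝ᵥ v = 1) :
    IsProjector (vecMulVec v (star v)) :=
  ⟨by rw [vecMulVec_mul_vecMulVec, hv, one_smul],
    by rw [conjTranspose_vecMulVec, star_star]⟩

lemma re_trace_mul_nonneg (hP : IsProjector P) {σ : Matrix (Fin d) (Fin d) ℂ}
    (hσ : σ.PosSemidef) : 0 ≤ (trace (σ * P)).re := by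
  have hconj : trace (σ * P) = trace (Pᴴ * σ * P) := by
    rw [hP.2, trace_mul_cycle, hP.1, trace_mul_comm]
  rw [hconj]
  exact (Complex.nonneg_iff.mp (hσ.conjTranspose_mul_mul_same P).trace_nonneg).1

end IsProjector

lemma Matrix.trace_mul_vecMulVec {n R : Type*} [Fintype n] [CommSemiring R]
    (B : Matrix n n R) (v w : n → R) : trace (B * vecMulVec v w) = w ⬝ᵥ (B *ᵥ v) := by
  rw [mul_vecMulVec, trace_vecMulVec, dotProduct_comm]

namespace IsState

variable {d : ℕ} {σ P : Matrix (Fin d) (Fin d) ℂ}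

lemma re_trace_mul_mem_Icc (hσ : IsState σ) (hP : IsProjector P) :
    (trace (σ * P)).re ∈ Set.Icc (0 : ℝ) 1 := by
  have hcompl := hP.one_sub.re_trace_mul_nonneg hσ.1
  rw [mul_sub, mul_one, trace_sub, hσ.2, Complex.sub_re, Complex.one_re] at hcompl
  exact ⟨hP.re_trace_mul_nonneg hσ.1, by linarith⟩

end IsState

namespace Matrix.IsHermitian

variable {n 𝕜 : Type*} [Fintype n] [DecidableEq n] [RCLike 𝕜] {A : Matrix n n 𝕜}

lemma star_dotProduct_eigenvectorBasis_self (hA : A.IsHermitian) (i : n) :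
    star ⇑(hA.eigenvectorBasis i) ⬝ᵥ ⇑(hA.eigenvectorBasis i) = 1 := by
  rw [dotProduct_comm, ← EuclideanSpace.inner_eq_star_dotProduct, inner_self_eq_norm_sq_to_K,
    hA.eigenvectorBasis.orthonormal.1 i, RCLike.ofReal_one, one_pow]

lemma eigenvalues_eq_re_trace_mul (hA : A.IsHermitian) (i : n) :
    hA.eigenvalues i = RCLike.re (trace (A *
      vecMulVec ⇑(hA.eigenvectorBasis i) (star ⇑(hA.eigenvectorBasis i)))) := by
  rw [trace_mul_vecMulVec, hA.eigenvalues_eq]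

open scoped Matrix.Norms.L2Operator in
lemma l2_opNorm_eq_norm_eigenvalues (hA : A.IsHermitian) : ‖A‖ = ‖hA.eigenvalues‖ := by
  conv_lhs => rw [hA.spectral_theorem, Unitary.conjStarAlgAut_apply, mul_assoc,
    CStarRing.norm_mem_unitary_mul _ hA.eigenvectorUnitary.2,
    CStarRing.norm_mul_mem_unitary _ (Unitary.star_mem hA.eigenvectorUnitary.2),
    l2_opNorm_diagonal]
  simp only [Pi.norm_def, Function.comp_apply]
  congr 2
  funext i
  exact NNReal.eq (by simp)

end Matrix.IsHermitian

open scoped Matrix.Norms.L2Operator in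
theorem gleason_finite_precision_general {d : ℕ} (l r : ℝ → ℝ)
    (hmap : ∀ x ∈ Set.Icc (0:ℝ) 1, 0 ≤ l x ∧ l x ≤ x ∧ x ≤ r x ∧ r x ≤ 1)
    (α : ℝ) (hα : 0 ≤ α) (hlen : ∀ x ∈ Set.Icc (0:ℝ) 1, r x - l x ≤ α)
    (ρ : Matrix (Fin d) (Fin d) ℂ) (hρ : IsState ρ)
    (ρ' : Matrix (Fin d) (Fin d) ℂ) (hρ' : IsState ρ')
    (hcons : ∀ P, IsProjector P →
      l ((Matrix.trace (ρ * P)).re) ≤ (Matrix.trace (ρ' * P)).re ∧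
      (Matrix.trace (ρ' * P)).re ≤ r ((Matrix.trace (ρ * P)).re)) :
    ‖ρ - ρ'‖ ≤ α ∧
    ∀ (h : (ρ - ρ').IsHermitian) (i : Fin d), |h.eigenvalues i| ≤ α := by
  have heig : ∀ (h : (ρ - ρ').IsHermitian) (i : Fin d), |h.eigenvalues i| ≤ α := by
    intro h i
    set P := vecMulVec ⇑(h.eigenvectorBasis i) (star ⇑(h.eigenvectorBasis i))
    have hP : IsProjector P :=
      IsProjector.vecMulVec_star (h.star_dotProduct_eigenvectorBasis_self i)
    have hx := hρ.re_trace_mul_mem_Icc hP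
    obtain ⟨-, hlx, hxr, -⟩ := hmap _ hx
    calc |h.eigenvalues i| = dist (trace (ρ * P)).re (trace (ρ' * P)).re := by
          rw [h.eigenvalues_eq_re_trace_mul, sub_mul, trace_sub, RCLike.re_to_complex,
            Complex.sub_re, Real.dist_eq]
      _ ≤ r (trace (ρ * P)).re - l (trace (ρ * P)).re :=
          Real.dist_le_of_mem_Icc ⟨hlx, hxr⟩ (hcons P hP)
      _ ≤ α := hlen _ hx
  refine ⟨?_, heig⟩
  rw [(hρ.1.1.sub hρ'.1.1).l2_opNorm_eq_norm_eigenvalues, pi_norm_le_iff_of_nonneg hα]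
  exact fun i => (Real.norm_eq_abs _).trans_le (heig _ i)

open scoped Matrix.Norms.L2Operator in
/-- Finite-precision extension of Gleason's theorem: any state consistent with the
interval-blurred Born measure of `ρ` is within `α` of `ρ` in the L2 operator norm
(equivalently every eigenvalue of the Hermitian matrix `ρ - ρ'` is at most `α`
in absolute value). -/
theorem gleason_finite_precision {d : ℕ} (l r : ℝ → ℝ)
    (hmap : ∀ x ∈ Set.Icc (0:ℝ) 1, 0 ≤ l x ∧ l x ≤ x ∧ x ≤ r x ∧ r x ≤ 1)
    (α : ℝ) (hα : 0 ≤ α) (hlen : ∀ x ∈ Set.Icc (0:ℝ) 1, r x - l x ≤ α)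
    (ρ : Matrix (Fin d) (Fin d) ℂ) (hρ : IsState ρ)
    (hQ : IsQIVPM (fun P => l ((Matrix.trace (ρ * P)).re))
                  (fun P => r ((Matrix.trace (ρ * P)).re)))
    (ρ' : Matrix (Fin d) (Fin d) ℂ) (hρ' : IsState ρ')
    (hcons : ∀ P, IsProjector P →
      l ((Matrix.trace (ρ * P)).re) ≤ (Matrix.trace (ρ' * P)).re ∧
      (Matrix.trace (ρ' * P)).re ≤ r ((Matrix.trace (ρ * P)).re)) :
    ‖ρ - ρ'‖ ≤ α ∧
    ∀ (h : (ρ - ρ').IsHermitian) (i : Fin d), |h.eigenvalues i| ≤ α :=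
  gleason_finite_precision_general l r hmap α hα hlen ρ hρ ρ' hρ' hcons
end

section
/- (QIVPM composition implies ultramodular) Let ℓ, r : ℝ → ℝ satisfy 0 ≤ ℓ x ≤ r x ≤ 1 for all x ∈ [0,1]. Suppose that for every d ≥ 1 and every quantum probability measure μ on ℂ^d, the pair L P = ℓ (μ P), R P = r (μ P) is a QIVPM on ℂ^d. Then (ℓ, r) is an ultramodular interval-valued map on [0,1]. -/
open Matrix
open scoped ComplexOrder

/-- An interval-valued map on `[0,1]`. -/
def IsIntervalValuedMap (l r : ℝ → ℝ) : Prop :=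
  ∀ x ∈ Set.Icc (0:ℝ) 1, 0 ≤ l x ∧ l x ≤ r x ∧ r x ≤ 1

/-- An ultramodular interval-valued map on `[0,1]`. -/
def IsUltramodular (l r : ℝ → ℝ) : Prop :=
  IsIntervalValuedMap l r ∧
  (l 0 = 0 ∧ r 0 = 0) ∧
  (l 1 = 1 ∧ r 1 = 1) ∧
  (∀ x ∈ Set.Icc (0:ℝ) 1, l (1 - x) = 1 - r x ∧ r (1 - x) = 1 - l x) ∧
  (∀ x₀ x₁ x₂ : ℝ, 0 ≤ x₀ → 0 ≤ x₁ → 0 ≤ x₂ → x₀ + x₁ + x₂ ≤ 1 →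
    l (x₀ + x₂) + l (x₁ + x₂) ≤ l (x₀ + x₁ + x₂) + l x₂ ∧
    r (x₀ + x₁ + x₂) + r x₂ ≤ r (x₀ + x₂) + r (x₁ + x₂))

/-- A (sharp) quantum probability measure on `ℂ^d`. -/
def IsQPM {d : ℕ} (μ : Matrix (Fin d) (Fin d) ℂ → ℝ) : Prop :=
  (∀ P, IsProjector P → 0 ≤ μ P ∧ μ P ≤ 1) ∧
  μ 0 = 0 ∧ μ 1 = 1 ∧
  (∀ P, IsProjector P → μ (1 - P) = 1 - μ P) ∧
  (∀ P₀ P₁, IsProjector P₀ → IsProjector P₁ → P₀ * P₁ = 0 → μ (P₀ + P₁) = μ P₀ + μ P₁)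


/-! Diagonal density matrices give quantum probability measures (Born rule) whose value on the
coordinate projector of a set `s` of basis vectors is the total weight of `s`. A projector of
measure `x` yields the bounds and the reflection law of `(l, r)` at `x`. With the four weights
`x₀, x₁, x₂, 1 - (x₀ + x₁ + x₂)`, the commuting coordinate projectors onto `{0, 2}` and `{1, 2}`
have meet `{2}` and join `{0, 1, 2}`, so the QIVPM convexity inequality for them is exactly the
ultramodularity inequality. -/

open Finset

section Projectors

variable {d : ℕ}

lemma IsProjector.one_sub_s11 {P : Matrix (Fin d) (Fin d) ℂ} (hP : IsProjector P) :
    IsProjector (1 - P) := by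
  refine ⟨?_, by rw [conjTranspose_sub, hP.2, conjTranspose_one]⟩
  rw [Matrix.sub_mul, Matrix.mul_sub, Matrix.mul_sub, hP.1]
  simp

noncomputable def coordProj (s : Finset (Fin d)) : Matrix (Fin d) (Fin d) ℂ :=
  diagonal fun i => if i ∈ s then 1 else 0

lemma isProjector_coordProj (s : Finset (Fin d)) : IsProjector (coordProj s) := by
  constructor
  · rw [coordProj, diagonal_mul_diagonal]
    congr 1
    ext i
    split_ifs <;> simp
  · rw [coordProj, diagonal_conjTranspose]
    congr 1
    ext i
    split_ifs <;> simp [*]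

lemma coordProj_mul_coordProj (s t : Finset (Fin d)) :
    coordProj s * coordProj t = coordProj (s ∩ t) := by
  rw [coordProj, coordProj, coordProj, diagonal_mul_diagonal]
  congr 1
  ext i
  by_cases hs : i ∈ s <;> by_cases ht : i ∈ t <;> simp [hs, ht]

lemma coordProj_add_sub_mul (s t : Finset (Fin d)) :
    coordProj s + coordProj t - coordProj s * coordProj t = coordProj (s ∪ t) := by
  rw [coordProj_mul_coordProj, coordProj, coordProj, coordProj, coordProj, diagonal_add,
    diagonal_sub]
  congr 1
  ext i
  by_cases hs : i ∈ s <;> by_cases ht : i ∈ t <;> simp [hs, ht]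

end Projectors

section TraceMeasure

variable {d : ℕ}

noncomputable def traceMeasure (ρ : Matrix (Fin d) (Fin d) ℂ) :
    Matrix (Fin d) (Fin d) ℂ → ℝ :=
  fun P => (ρ * P).trace.re

lemma traceMeasure_nonneg {ρ P : Matrix (Fin d) (Fin d) ℂ} (hρ : ρ.PosSemidef)
    (hP : IsProjector P) : 0 ≤ traceMeasure ρ P := by
  have hsandwich : (ρ * P).trace = (P * ρ * Pᴴ).trace := by
    rw [hP.2, Matrix.mul_assoc, trace_mul_comm P, Matrix.mul_assoc, hP.1]
  rw [traceMeasure, hsandwich]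
  exact (Complex.nonneg_iff.mp (hρ.mul_mul_conjTranspose_same P).trace_nonneg).1

lemma traceMeasure_one_sub {ρ : Matrix (Fin d) (Fin d) ℂ} (hρ : ρ.trace = 1)
    (P : Matrix (Fin d) (Fin d) ℂ) : traceMeasure ρ (1 - P) = 1 - traceMeasure ρ P := by
  simp [traceMeasure, Matrix.mul_sub, hρ]

lemma IsState.isQPM_traceMeasure {ρ : Matrix (Fin d) (Fin d) ℂ} (hρ : IsState ρ) :
    IsQPM (traceMeasure ρ) := by
  refine ⟨fun P hP => ⟨traceMeasure_nonneg hρ.1 hP, ?_⟩, by simp [traceMeasure],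
    by simp [traceMeasure, hρ.2], fun P _ => traceMeasure_one_sub hρ.2 P,
    fun P₀ P₁ _ _ _ => by simp [traceMeasure, Matrix.mul_add]⟩
  have := traceMeasure_nonneg hρ.1 hP.one_sub_s11
  rw [traceMeasure_one_sub hρ.2] at this
  linarith

lemma isState_diagonal {w : Fin d → ℝ} (hw : ∀ i, 0 ≤ w i) (hsum : ∑ i, w i = 1) :
    IsState (diagonal fun i => (w i : ℂ)) := by
  refine ⟨posSemidef_diagonal_iff.mpr fun i => Complex.zero_le_real.mpr (hw i), ?_⟩
  rw [trace_diagonal, ← Complex.ofReal_sum, hsum, Complex.ofReal_one]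

lemma traceMeasure_diagonal_coordProj (w : Fin d → ℝ) (s : Finset (Fin d)) :
    traceMeasure (diagonal fun i => (w i : ℂ)) (coordProj s) = ∑ i ∈ s, w i := by
  simp [traceMeasure, coordProj, Complex.re_sum]

end TraceMeasure

lemma exists_isQPM_coordProj {d : ℕ} {w : Fin d → ℝ} (hw : ∀ i, 0 ≤ w i)
    (hsum : ∑ i, w i = 1) :
    ∃ μ : Matrix (Fin d) (Fin d) ℂ → ℝ, IsQPM μ ∧ ∀ s, μ (coordProj s) = ∑ i ∈ s, w i :=
  ⟨_, (isState_diagonal hw hsum).isQPM_traceMeasure, traceMeasure_diagonal_coordProj w⟩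

lemma exists_isQPM_apply_eq {x : ℝ} (hx : x ∈ Set.Icc 0 1) :
    ∃ μ : Matrix (Fin 2) (Fin 2) ℂ → ℝ, IsQPM μ ∧ ∃ P, IsProjector P ∧ μ P = x := by
  obtain ⟨μ, hμ, hval⟩ := exists_isQPM_coordProj (w := ![x, 1 - x])
    (fun i => by fin_cases i <;> simp [hx.1, hx.2]) (by simp)
  exact ⟨μ, hμ, coordProj {0}, isProjector_coordProj _, by simp [hval]⟩

lemma exists_isQPM_commuting_projectors {x₀ x₁ x₂ : ℝ} (h₀ : 0 ≤ x₀) (h₁ : 0 ≤ x₁)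
    (h₂ : 0 ≤ x₂) (hs : x₀ + x₁ + x₂ ≤ 1) :
    ∃ μ : Matrix (Fin 4) (Fin 4) ℂ → ℝ, IsQPM μ ∧ ∃ P₀ P₁, IsProjector P₀ ∧ IsProjector P₁ ∧
      P₀ * P₁ = P₁ * P₀ ∧ μ P₀ = x₀ + x₂ ∧ μ P₁ = x₁ + x₂ ∧
      μ (P₀ + P₁ - P₀ * P₁) = x₀ + x₁ + x₂ ∧ μ (P₀ * P₁) = x₂ := by
  obtain ⟨μ, hμ, hval⟩ := exists_isQPM_coordProj (w := ![x₀, x₁, x₂, 1 - (x₀ + x₁ + x₂)])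
    (fun i => by fin_cases i <;> simp [*]) (by simp [Fin.sum_univ_four])
  refine ⟨μ, hμ, coordProj {0, 2}, coordProj {1, 2}, isProjector_coordProj _,
    isProjector_coordProj _, by simp only [coordProj_mul_coordProj, inter_comm], ?_⟩
  rw [coordProj_add_sub_mul, coordProj_mul_coordProj, hval, hval, hval, hval]
  exact ⟨by simp, by simp, by simp [add_left_comm, add_assoc], by simp⟩

theorem QIVPM_comp_implies_ultramodular_general (l r : ℝ → ℝ)
    (hcomp : ∀ d : ℕ, 1 ≤ d → ∀ μ : Matrix (Fin d) (Fin d) ℂ → ℝ, IsQPM μ →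
      IsQIVPM (fun P => l (μ P)) (fun P => r (μ P))) :
    IsUltramodular l r := by
  have hpoint : ∀ x ∈ Set.Icc (0 : ℝ) 1, (0 ≤ l x ∧ l x ≤ r x ∧ r x ≤ 1) ∧
      (l (1 - x) = 1 - r x ∧ r (1 - x) = 1 - l x) := by
    intro x hx
    obtain ⟨μ, hμ, P, hP, rfl⟩ := exists_isQPM_apply_eq hx
    have hQ := hcomp 2 (by norm_num) μ hμ
    rw [← hμ.2.2.2.1 P hP]
    exact ⟨hQ.1 P hP, hQ.2.2.2.1 P hP⟩
  obtain ⟨μ, hμ, -⟩ := exists_isQPM_apply_eq (x := 0) (by simp)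
  obtain ⟨-, ⟨hl0, hr0⟩, ⟨hl1, hr1⟩, -⟩ := hcomp 2 (by norm_num) μ hμ
  simp only [hμ.2.1, hμ.2.2.1] at hl0 hr0 hl1 hr1
  refine ⟨fun x hx => (hpoint x hx).1, ⟨hl0, hr0⟩, ⟨hl1, hr1⟩, fun x hx => (hpoint x hx).2, ?_⟩
  intro x₀ x₁ x₂ h₀ h₁ h₂ hs
  obtain ⟨μ, hμ, P₀, P₁, hP₀, hP₁, hcomm, e₀, e₁, e₀₁, e₂⟩ :=
    exists_isQPM_commuting_projectors h₀ h₁ h₂ hs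
  simpa only [e₀, e₁, e₀₁, e₂] using (hcomp 4 (by norm_num) μ hμ).2.2.2.2 P₀ P₁ hP₀ hP₁ hcomm

/-- If composing `(l, r)` with every quantum probability measure (in every dimension
`d ≥ 1`) yields a QIVPM, then `(l, r)` is ultramodular. -/
theorem QIVPM_comp_implies_ultramodular (l r : ℝ → ℝ)
    (hmap : IsIntervalValuedMap l r)
    (hcomp : ∀ d : ℕ, 1 ≤ d → ∀ μ : Matrix (Fin d) (Fin d) ℂ → ℝ, IsQPM μ →
      IsQIVPM (fun P => l (μ P)) (fun P => r (μ P))) :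
    IsUltramodular l r :=
  QIVPM_comp_implies_ultramodular_general l r hcomp
end
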